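/- Consider on R^3 the 3-wave system with V^i_j = diag(−c_1, −c_2, −c_3) and W^1 = −2(c_2 − c_3) u^2 u^3, W^2 = −2(c_1 − c_3) u^1 u^3, W^3 = −2(c_2 − c_1) u^1 u^2, where c_1, c_2, c_3 are constants, and the operator with constant leading coefficient g = diag(1, −1, −1), b^{ij}_k = 0, and ω skew-symmetric with ω^{12} = −2u^3, ω^{13} = 2u^2, ω^{23} = 2u^1. Then the compatibility conditions hold: (1) V^i_s g^{sj} = V^j_s g^{si}; (2) g^{is}(V^j_{s,k} − V^j_{k,s}) = 0; (3) g^{ij}_{,s} W^s − g^{js} W^i_{,s} − g^{is} W^j_{,s} − ω^{si} V^j_s − ω^{sj} V^i_s = 0; (4) W^i_{,s} ω^{sj} + W^j_{,s} ω^{is} + ω^{ji}_{,s} W^s = 0; (5) T^{ij}_k = 0 with T^{ij}_k = −g^{il} W^j_{,lk} − V^i_{k,s} ω^{sj} + ω^{is}(V^j_{s,k} − V^j_{k,s}) + ω^{ij}_{,s} V^s_k − ω^{sj}_{,k} V^i_s. -/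

import Mathlib

open scoped BigOperators

set_option linter.unusedVariables false

noncomputable def pd {n : ℕ} (s : Fin n) (f : (Fin n → ℝ) → ℝ) (u : Fin n → ℝ) : ℝ :=
  fderiv ℝ f u (Pi.single s 1)

/-- 3-wave system: homogeneous part `V = diag(−c₁, −c₂, −c₃)`. -/
noncomputable def V3w (c₁ c₂ c₃ : ℝ) (u : Fin 3 → ℝ) : Fin 3 → Fin 3 → ℝ :=
  fun i j => !![-c₁, 0, 0; 0, -c₂, 0; 0, 0, -c₃] i j

/-- Non-homogeneous part of the 3-wave system. -/
noncomputable def W3w (c₁ c₂ c₃ : ℝ) (u : Fin 3 → ℝ) : Fin 3 → ℝ :=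
  ![-2*(c₂ - c₃) * u 1 * u 2, -2*(c₁ - c₃) * u 0 * u 2, -2*(c₂ - c₁) * u 0 * u 1]

/-- Constant leading coefficient `g = diag(1,−1,−1)`. -/
noncomputable def g3w (u : Fin 3 → ℝ) : Fin 3 → Fin 3 → ℝ :=
  fun i j => !![1, 0, 0; 0, -1, 0; 0, 0, -1] i j

/-- Zeroth-order part: `ω^{12} = −2u³`, `ω^{13} = 2u²`, `ω^{23} = 2u¹`. -/
noncomputable def ω3w (u : Fin 3 → ℝ) : Fin 3 → Fin 3 → ℝ :=
  fun i j => !![0, -2*u 2, 2*u 1; 2*u 2, 0, 2*u 0; -2*u 1, -2*u 0, 0] i j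

/-! `V` and `g` are constant, `ω` is linear and `W` quadratic in `u`, so every partial derivative
occurring in the conditions is an explicit polynomial in `u`; once these are computed, each condition
is a polynomial identity checked entry by entry. -/

section PartialDerivative

variable {n : ℕ} (s : Fin n) (u : Fin n → ℝ)

@[simp]
theorem pd_const (c : ℝ) : pd s (fun _ => c) u = 0 := by
  simp [pd]

@[simp]
theorem pd_neg (f : (Fin n → ℝ) → ℝ) : pd s (fun v => -f v) u = -pd s f u := by
  simp [pd]

@[simp]
theorem pd_const_mul_apply (a : ℝ) (m : Fin n) :
    pd s (fun v => a * v m) u = a * (Pi.single s 1 : Fin n → ℝ) m := by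
  rw [pd, ((hasFDerivAt_apply m u).const_mul a).fderiv]
  simp

@[simp]
theorem pd_const_mul_apply_mul_apply (a : ℝ) (p q : Fin n) :
    pd s (fun v => a * v p * v q) u
      = a * ((Pi.single s 1 : Fin n → ℝ) p * u q + u p * (Pi.single s 1 : Fin n → ℝ) q) := by
  rw [pd, (((hasFDerivAt_apply p u).const_mul a).fun_mul (hasFDerivAt_apply q u)).fderiv]
  simp only [add_apply, smul_apply, ContinuousLinearMap.proj_apply, smul_eq_mul]
  ring

end PartialDerivative

def dW3w (c₁ c₂ c₃ : ℝ) (u : Fin 3 → ℝ) : Matrix (Fin 3) (Fin 3) ℝ :=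
  !![0, -2*(c₂ - c₃) * u 2, -2*(c₂ - c₃) * u 1;
    -2*(c₁ - c₃) * u 2, 0, -2*(c₁ - c₃) * u 0;
    -2*(c₂ - c₁) * u 1, -2*(c₂ - c₁) * u 0, 0]

section ThreeWave

variable (c₁ c₂ c₃ : ℝ) (s : Fin 3) (u : Fin 3 → ℝ)

@[simp]
theorem pd_V3w (i j : Fin 3) : pd s (fun v => V3w c₁ c₂ c₃ v i j) u = 0 :=
  pd_const s u _

@[simp]
theorem pd_g3w (i j : Fin 3) : pd s (fun v => g3w v i j) u = 0 :=
  pd_const s u _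

@[simp]
theorem pd_ω3w (i j : Fin 3) : pd s (fun v => ω3w v i j) u = ω3w (Pi.single s 1) i j := by
  fin_cases i <;> fin_cases j <;> simp [ω3w]

@[simp]
theorem pd_W3w (i : Fin 3) : pd s (fun v => W3w c₁ c₂ c₃ v i) u = dW3w c₁ c₂ c₃ u i s := by
  fin_cases i <;> fin_cases s <;> simp [W3w, dW3w]

@[simp]
theorem pd_dW3w (i j : Fin 3) :
    pd s (fun v => dW3w c₁ c₂ c₃ v i j) u = dW3w c₁ c₂ c₃ (Pi.single s 1) i j := by
  fin_cases i <;> fin_cases j <;> simp [dW3w]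

end ThreeWave

/-- The 3-wave system is compatible with the non-homogeneous local operator
`M = diag(1,−1,−1)∂ₓ + ω`: all compatibility conditions hold. -/
theorem threeWave_compatibility (c₁ c₂ c₃ : ℝ) :
    -- (1) V^i_s g^{sj} = V^j_s g^{si}
    (∀ u : Fin 3 → ℝ, ∀ i j : Fin 3,
      ∑ s, V3w c₁ c₂ c₃ u i s * g3w u s j = ∑ s, V3w c₁ c₂ c₃ u j s * g3w u s i)
    ∧
    -- (2) g^{is}(V^j_{s,k} − V^j_{k,s}) = 0
    (∀ u : Fin 3 → ℝ, ∀ i j k : Fin 3,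
      ∑ s, g3w u i s * (pd k (fun v => V3w c₁ c₂ c₃ v j s) u
          - pd s (fun v => V3w c₁ c₂ c₃ v j k) u) = 0)
    ∧
    -- (3)
    (∀ u : Fin 3 → ℝ, ∀ i j : Fin 3,
      ∑ s, (pd s (fun v => g3w v i j) u * W3w c₁ c₂ c₃ u s
          - g3w u j s * pd s (fun v => W3w c₁ c₂ c₃ v i) u
          - g3w u i s * pd s (fun v => W3w c₁ c₂ c₃ v j) u
          - ω3w u s i * V3w c₁ c₂ c₃ u j s - ω3w u s j * V3w c₁ c₂ c₃ u i s) = 0)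
    ∧
    -- (4)
    (∀ u : Fin 3 → ℝ, ∀ i j : Fin 3,
      ∑ s, (pd s (fun v => W3w c₁ c₂ c₃ v i) u * ω3w u s j
          + pd s (fun v => W3w c₁ c₂ c₃ v j) u * ω3w u i s
          + pd s (fun v => ω3w v j i) u * W3w c₁ c₂ c₃ u s) = 0)
    ∧
    -- (5) T^{ij}_k = 0 (b = 0 and g constant)
    (∀ u : Fin 3 → ℝ, ∀ i j k : Fin 3,
      (- ∑ l, g3w u i l * pd k (fun v => pd l (fun w => W3w c₁ c₂ c₃ w j) v) u)
      - (∑ s, pd s (fun v => V3w c₁ c₂ c₃ v i k) u * ω3w u s j)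
      + (∑ s, ω3w u i s * (pd k (fun v => V3w c₁ c₂ c₃ v j s) u
            - pd s (fun v => V3w c₁ c₂ c₃ v j k) u))
      + (∑ s, pd s (fun v => ω3w v i j) u * V3w c₁ c₂ c₃ u s k)
      - (∑ s, pd k (fun v => ω3w v s j) u * V3w c₁ c₂ c₃ u i s) = 0) := by
  refine ⟨fun u i j => ?_, fun u i j k => by simp, fun u i j => ?_, fun u i j => ?_,
    fun u i j k => ?_⟩
  · fin_cases i <;> fin_cases j <;> simp [V3w, g3w, Fin.sum_univ_three]
  · simp only [pd_g3w, pd_W3w]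
    fin_cases i <;> fin_cases j <;> simp [V3w, g3w, ω3w, dW3w, Fin.sum_univ_three] <;> ring
  · simp only [pd_W3w, pd_ω3w]
    fin_cases i <;> fin_cases j <;> simp [W3w, ω3w, dW3w, Fin.sum_univ_three] <;> ring
  · simp only [pd_V3w, pd_W3w, pd_dW3w, pd_ω3w]
    fin_cases i <;> fin_cases j <;> fin_cases k <;>
      simp [V3w, g3w, ω3w, dW3w, Fin.sum_univ_three] <;> ring
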